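/- Soundness of the Identity axiom for process realizability: for every formula A (with atoms interpreted by arbitrary pairs of positive/negative realizer sets), the wire process I ≝ rec X. Σ_{a ∈ Act₊} (l(a) ∪ r(a)‾).X satisfies I ⊩₊ A^⊥ ⅋ A, i.e. I realizes A ⊸ A: for all Q with Q ⊩₊ A, ⟨Q | I⟩ ⊩₊ A, and for all R with R ⊩₋ A, (I | R⟩ ⊩₋ A. -/

import Mathlib

set_option linter.unnecessarySeqFocus false

/-! # CCS with simultaneous actions (Abramsky, "Process Realizability") -/

/-- Labels: names (`inl`) and co-names (`inr`). -/
abbrev Label : Type := ℕ ⊕ ℕ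

/-- The involution `λ ↦ λ̄` exchanging names and co-names. -/
def Label.bar : Label → Label
  | .inl n => .inr n
  | .inr n => .inl n

/-- Actions: finite sets of labels, performed simultaneously.  `τ = ∅`. -/
abbrev Act : Type := Finset Label

/-- A renaming: a partial injective function on labels preserving the involution. -/
structure Renaming where
  toFun : Label → Option Label
  inj : ∀ ⦃x y z : Label⦄, toFun x = some z → toFun y = some z → x = y
  bar : ∀ x : Label, toFun (Label.bar x) = (toFun x).map Label.bar

/-- The pointwise extension of a renaming to actions. -/
def Renaming.onAction (f : Renaming) (a : Act) : Act :=
  a.filterMap f.toFun (fun _ _ _ hx hy => f.inj (Option.mem_def.mp hx) (Option.mem_def.mp hy))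

/-- Guarded process terms of CCS with simultaneous actions:
prefix, countably-indexed guarded sums (all guards non-`τ`), parallel composition,
restriction, renaming, process variables (de Bruijn) and recursion. -/
inductive Proc : Type where
  | pre (a : Act) (P : Proc)
  | sum (I : Set ℕ) (act : ℕ → Act) (cont : ℕ → Proc) (hg : ∀ n ∈ I, (act n).Nonempty)
  | par (P Q : Proc)
  | restrict (P : Proc) (L : Set Label)
  | rename (P : Proc) (f : Renaming)
  | var (n : ℕ)
  | fix (P : Proc)

/-- The inactive process `0` (the empty sum). -/
def Proc.nil : Proc := .sum ∅ (fun _ => ∅) (fun _ => .var 0) (by simp)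

/-- Substitution of a process for the variable with de Bruijn index `d`. -/
def Proc.subst (R : Proc) : ℕ → Proc → Proc
  | d, .pre a P => .pre a (Proc.subst R d P)
  | d, .sum I act cont hg => .sum I act (fun n => Proc.subst R d (cont n)) hg
  | d, .par P Q => .par (Proc.subst R d P) (Proc.subst R d Q)
  | d, .restrict P L => .restrict (Proc.subst R d P) L
  | d, .rename P f => .rename (Proc.subst R d P) f
  | d, .var n => if n = d then R else .var n
  | d, .fix P => .fix (Proc.subst R (d + 1) P)

/-- The labelled transition relation, with the generalized synchronization rule
for simultaneous (compound) actions. -/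
inductive Step : Proc → Act → Proc → Prop where
  | pre {a P} : Step (.pre a P) a P
  | sum {I act cont hg} (j : ℕ) (hj : j ∈ I) : Step (.sum I act cont hg) (act j) (cont j)
  | restrict {P a Q L} : Step P a Q → (∀ l ∈ a, l ∉ L ∧ Label.bar l ∉ L) →
      Step (.restrict P L) a (.restrict Q L)
  | rename {P a Q} {f : Renaming} : Step P a Q → (∀ l ∈ a, (f.toFun l).isSome) →
      Step (.rename P f) (f.onAction a) (.rename Q f)
  | fix {P a Q} : Step (Proc.subst (.fix P) 0 P) a Q → Step (.fix P) a Q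
  | parL {P a P' Q} : Step P a P' → Step (.par P Q) a (.par P' Q)
  | parR {P Q a Q'} : Step Q a Q' → Step (.par P Q) a (.par P Q')
  | sync {P Q P' Q' a b c} : Step P (a ∪ b) P' → Step Q (b.image Label.bar ∪ c) Q' →
      Disjoint a b → Disjoint (b.image Label.bar) c → Disjoint a c →
      Step (.par P Q) (a ∪ c) (.par P' Q')

/-- Zero or more silent (`τ`) transitions. -/
def TauStar : Proc → Proc → Prop :=
  Relation.ReflTransGen (fun P Q => Step P ∅ Q)

/-- Observable transition `P ⟹a Q`: `τ* a τ*`. -/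
def Obs (P : Proc) (a : Act) (Q : Proc) : Prop :=
  ∃ P₁ P₂, TauStar P P₁ ∧ Step P₁ a P₂ ∧ TauStar P₂ Q

/-- Observable transitions along a string of (non-`τ`) actions. -/
inductive ObsSeq : Proc → List Act → Proc → Prop where
  | nil {P Q} : TauStar P Q → ObsSeq P [] Q
  | cons {P a Q s R} : Obs P a Q → ObsSeq Q s R → ObsSeq P (a :: s) R

/-- The failures of a process: pairs `(s, X)` with `s` a string of nonempty actions and
`X` a set of nonempty actions such that `P ⟹s Q` for some `Q` refusing every action of `X`. -/
def failures (P : Proc) : Set (List Act × Set Act) :=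
  { sX | (∀ a ∈ sX.1, a.Nonempty) ∧ (∀ a ∈ sX.2, a.Nonempty) ∧
      ∃ Q, ObsSeq P sX.1 Q ∧ ∀ a ∈ sX.2, ¬∃ R, Obs Q a R }

/-- Failures equivalence. -/
def FailEq (P Q : Proc) : Prop := failures P = failures Q

/-- Weak simulations (with respect to the observable transitions). -/
def IsWeakSim (R : Proc → Proc → Prop) : Prop :=
  ∀ ⦃P Q⦄, R P Q →
    (∀ P', TauStar P P' → ∃ Q', TauStar Q Q' ∧ R P' Q') ∧
    (∀ a P', (a : Act).Nonempty → Obs P a P' → ∃ Q', Obs Q a Q' ∧ R P' Q')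

/-- Weak bisimilarity. -/
def WeakBisim (P Q : Proc) : Prop :=
  ∃ R : Proc → Proc → Prop, IsWeakSim R ∧ IsWeakSim (fun x y => R y x) ∧ R P Q
/-! ## The split name space and the basic combinators -/

/-- Build a bar-preserving partial injective renaming from a partial injective map on names. -/
def Renaming.ofNameFun (f : ℕ → Option ℕ)
    (hf : ∀ ⦃x y z : ℕ⦄, f x = some z → f y = some z → x = y) : Renaming where
  toFun := fun l =>
    match l with
    | .inl n => (f n).map .inl
    | .inr n => (f n).map .inr
  inj := by
    rintro (x | x) (y | y) (z | z) hx hy <;>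
      simp only [Option.map_eq_some_iff] at hx hy <;>
      obtain ⟨a, ha, ha'⟩ := hx <;> obtain ⟨b, hb, hb'⟩ := hy <;>
        solve
          | (cases ha'; cases hb'; exact congrArg _ (hf ha hb))
          | (cases hb')
          | (cases ha')
  bar := by
    rintro (n | n) <;> cases hf : f n <;> simp [Label.bar, hf]

/-- The underlying name of a label. -/
def Label.name : Label → ℕ := Sum.elim id id

/-- The injection `l` of the name space onto its "left" half (even names). -/
def lRen : Renaming := Renaming.ofNameFun (fun n => some (2 * n)) (by intro x y z hx hy; simp only [Option.some.injEq] at hx hy; omega)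

/-- The injection `r` of the name space onto its "right" half (odd names). -/
def rRen : Renaming := Renaming.ofNameFun (fun n => some (2 * n + 1)) (by intro x y z hx hy; simp only [Option.some.injEq] at hx hy; omega)

/-- The partial inverse `l⁻¹` of `l`. -/
def lInv : Renaming :=
  Renaming.ofNameFun (fun n => if n % 2 = 0 then some (n / 2) else none)
    (by intro x y z hx hy; try dsimp only at hx hy
        split at hx <;> split at hy <;> simp_all <;> omega)

/-- The partial inverse `r⁻¹` of `r`. -/
def rInv : Renaming :=
  Renaming.ofNameFun (fun n => if n % 2 = 1 then some (n / 2) else none)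
    (by intro x y z hx hy; try dsimp only at hx hy
        split at hx <;> split at hy <;> simp_all <;> omega)

/-- The left half `ℒ_l` of the label space. -/
def LabL : Set Label := {x | x.name % 2 = 0}

/-- The right half `ℒ_r` of the label space. -/
def LabR : Set Label := {x | x.name % 2 = 1}

/-- Tensor product: disjoint (non-communicating) parallel composition `P[l] | Q[r]`. -/
def tensor (P Q : Proc) : Proc := .par (P.rename lRen) (Q.rename rRen)

/-- Left (forwards) application `⟨Q | P⟩ = ((Q[l] | P) ∖ ℒ_l)[r⁻¹]`. -/
def lapp (Q P : Proc) : Proc := ((Proc.par (Q.rename lRen) P).restrict LabL).rename rInv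

/-- Right (reverse) application `(P | R⟩ = ((P | R[r]) ∖ ℒ_r)[l⁻¹]`. -/
def rapp (P R : Proc) : Proc := ((Proc.par P (R.rename rRen)).restrict LabR).rename lInv

/-! ### The three-fold decomposition `𝒩 = 𝒩₁ ∪̇ 𝒩₂ ∪̇ 𝒩₃` and composition -/

/-- `φ₁₂ : 𝒩 ≅ 𝒩₁ ∪̇ 𝒩₂` (`𝒩ᵢ` = names `≡ i - 1 (mod 3)`), carrying `𝒩_l` onto `𝒩₁`, `𝒩_r` onto `𝒩₂`. -/
def phi12 : Renaming :=
  Renaming.ofNameFun (fun n => some (if n % 2 = 0 then 3 * (n / 2) else 3 * (n / 2) + 1))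
    (by intro x y z hx hy; try dsimp only at hx hy
        simp only [Option.some.injEq] at hx hy
        split at hx <;> split at hy <;> omega)

/-- `φ₂₃ : 𝒩 ≅ 𝒩₂ ∪̇ 𝒩₃`, carrying `𝒩_l` onto `𝒩₂`, `𝒩_r` onto `𝒩₃`. -/
def phi23 : Renaming :=
  Renaming.ofNameFun (fun n => some (if n % 2 = 0 then 3 * (n / 2) + 1 else 3 * (n / 2) + 2))
    (by intro x y z hx hy; try dsimp only at hx hy
        simp only [Option.some.injEq] at hx hy
        split at hx <;> split at hy <;> omega)

/-- The partial inverse `φ₁₃⁻¹` of `φ₁₃ : 𝒩 ≅ 𝒩₁ ∪̇ 𝒩₃`. -/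
def phi13Inv : Renaming :=
  Renaming.ofNameFun
    (fun n => if n % 3 = 0 then some (2 * (n / 3)) else if n % 3 = 2 then some (2 * (n / 3) + 1) else none)
    (by intro x y z hx hy; try dsimp only at hx hy
        split at hx <;> split at hy <;> simp_all <;> omega)

/-- The middle part `𝒩₂` of the label space (as a set of labels). -/
def Lab2 : Set Label := {x | x.name % 3 = 1}

/-- Composition `P ; Q = ((P[φ₁₂] | Q[φ₂₃]) ∖ 𝒩₂)[φ₁₃⁻¹]`. -/
def comp (P Q : Proc) : Proc :=
  ((Proc.par (P.rename phi12) (Q.rename phi23)).restrict Lab2).rename phi13Inv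

/-! ### The identity (wire) process -/

/-- The identity process `I = rec X. Σ_{a ∈ Act₊} (l(a) ∪ r(a)‾).X`. -/
noncomputable def Iproc : Proc :=
  .fix (.sum {n | ∃ a : Act, (Encodable.decode n : Option Act) = some a ∧ a.Nonempty}
    (fun n =>
      match (Encodable.decode n : Option Act) with
      | some a => lRen.onAction a ∪ (rRen.onAction a).image Label.bar
      | none => {Sum.inl 0})
    (fun _ => .var 0)
    (by rintro n ⟨a, ha, hne⟩
        simp only [ha]
        obtain ⟨x, hx⟩ := hne
        refine Finset.Nonempty.mono Finset.subset_union_left ⟨(Sum.map (2 * ·) (2 * ·)) x, ?_⟩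
        simp only [Renaming.onAction, Finset.mem_filterMap]
        exact ⟨x, hx, by cases x <;> rfl⟩))

/-! ## Guarded choice combinators, the additive pairing and injections, `!P`, divergence -/

/-- Binary guarded sum `a.P + b.Q` (guards must be non-`τ`). -/
def gsum2 (a : Act) (P : Proc) (b : Act) (Q : Proc) (ha : a.Nonempty) (hb : b.Nonempty) : Proc :=
  .sum {0, 1} (fun n => if n = 0 then a else b) (fun n => if n = 0 then P else Q)
    (by intro n _; (try dsimp only); split <;> assumption)

/-- Ternary guarded sum `a.P + b.Q + c.R`. -/
def gsum3 (a : Act) (P : Proc) (b : Act) (Q : Proc) (c : Act) (R : Proc)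
    (ha : a.Nonempty) (hb : b.Nonempty) (hc : c.Nonempty) : Proc :=
  .sum {0, 1, 2} (fun n => if n = 0 then a else if n = 1 then b else c)
    (fun n => if n = 0 then P else if n = 1 then Q else R)
    (by intro n _; (try dsimp only); split <;> [skip; split] <;> assumption)

/-- The distinguished names: `α = 0`, `β = 1`, `ω = 2`, `δ = 3`, `γ = 4`, `σ = 5`. -/
def αAct : Act := {Sum.inl 0}
def βAct : Act := {Sum.inl 1}
def αBar : Act := {Sum.inr 0}
def βBar : Act := {Sum.inr 1}
def ωAct : Act := {Sum.inl 2}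
def δBar : Act := {Sum.inr 3}
def γBar : Act := {Sum.inr 4}

/-- The additive pairing `⟨P, Q⟩ = r(α).P + r(β).Q`  (`r(α) = 1`, `r(β) = 3`). -/
def pairR (P Q : Proc) : Proc :=
  gsum2 {Sum.inl 1} P {Sum.inl 3} Q (Finset.singleton_nonempty _) (Finset.singleton_nonempty _)

/-- The plain additive pairing `α.P + β.Q` used in the realizability clauses for `&`. -/
def pairProc (P Q : Proc) : Proc :=
  gsum2 αAct P βAct Q (Finset.singleton_nonempty _) (Finset.singleton_nonempty _)

/-- The left injection `l(P) = l(α)‾.P`  (`l(α) = 0`). -/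
def injl (P : Proc) : Proc := .pre {Sum.inr 0} P

/-- The right injection `r(Q) = r(β)‾.Q`  (`r(β) = 3`). -/
def injr (Q : Proc) : Proc := .pre {Sum.inr 3} Q

/-- The exponential combinator `!P = rec X.(ω.0 + δ.P + γ.(X[l] | X[r]))`. -/
def bangProc (P : Proc) : Proc :=
  .fix (gsum3 ωAct Proc.nil ({Sum.inl 3} : Act) P ({Sum.inl 4} : Act)
    (.par (Proc.rename (.var 0) lRen) (Proc.rename (.var 0) rRen))
    (Finset.singleton_nonempty _) (Finset.singleton_nonempty _) (Finset.singleton_nonempty _))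

/-- `P` diverges if there is an infinite sequence of `τ`-transitions from `P`. -/
def Diverges (P : Proc) : Prop :=
  ∃ f : ℕ → Proc, f 0 = P ∧ ∀ n, Step (f n) ∅ (f (n + 1))

/-- `P ⊥ Q`: closing the system, `P` and `Q` interacting with each other yield no divergence. -/
def Orth (P Q : Proc) : Prop := ¬ Diverges ((Proc.par P Q).restrict Set.univ)

/-! ## Formulas of classical propositional Linear Logic and process realizability -/

/-- Formulas of classical propositional Linear Logic.  Atoms are given arbitrary pairs of
positive/negative realizer sets, required to be closed under failures equivalence
(realizers are processes taken up to `≈_f`). -/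
inductive Formula : Type where
  | atom (pos neg : Set Proc)
      (hpos : ∀ ⦃P Q : Proc⦄, FailEq P Q → P ∈ pos → Q ∈ pos)
      (hneg : ∀ ⦃P Q : Proc⦄, FailEq P Q → P ∈ neg → Q ∈ neg)
  | tensor (A B : Formula)
  | parr (A B : Formula)
  | wth (A B : Formula)
  | oplus (A B : Formula)
  | bang (A : Formula)
  | quest (A : Formula)

/-- Linear negation `A^⊥`, by de Morgan duality. -/
def Formula.neg : Formula → Formula
  | .atom p n hp hn => .atom n p hn hp
  | .tensor A B => .parr A.neg B.neg
  | .parr A B => .tensor A.neg B.neg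
  | .wth A B => .oplus A.neg B.neg
  | .oplus A B => .wth A.neg B.neg
  | .bang A => .quest A.neg
  | .quest A => .bang A.neg

/-- The inductively defined set of counter-realizers of `!A` (least fixed point):
`P ⊩₋ !A` iff `P ≈_f ω.0`, or `P ≈_f δ̄.Q` with `Q ⊩₋ A`, or `P ≈_f γ̄.Q` and for every
`R ⊩₊ A`, `⟨!R | Q⟩ ⊩₋ !A` and `(Q | !R⟩ ⊩₋ !A`. -/
inductive BangNeg (posA negA : Set Proc) : Proc → Prop where
  | weak {P} : FailEq P (.pre ωAct Proc.nil) → BangNeg posA negA P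
  | der {P Q} : FailEq P (.pre δBar Q) → Q ∈ negA → BangNeg posA negA P
  | contr {P Q} : FailEq P (.pre γBar Q) →
      (∀ R ∈ posA, BangNeg posA negA (lapp (bangProc R) Q)) →
      (∀ R ∈ posA, BangNeg posA negA (rapp Q (bangProc R))) →
      BangNeg posA negA P

/-- The realizability semantics of a formula: the pair
(positive realizers `⊩₊`, negative realizers/counter-realizers `⊩₋`). -/
def sem : Formula → Set Proc × Set Proc
  | .atom p n _ _ => (p, n)
  | .tensor A B =>
      ({ P | ∃ P₁ P₂, FailEq P (tensor P₁ P₂) ∧ P₁ ∈ (sem A).1 ∧ P₂ ∈ (sem B).1 },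
       { P | (∀ Q ∈ (sem A).1, lapp Q P ∈ (sem B).2) ∧ (∀ R ∈ (sem B).1, rapp P R ∈ (sem A).2) })
  | .parr A B =>
      ({ P | (∀ Q ∈ (sem A).2, lapp Q P ∈ (sem B).1) ∧ (∀ R ∈ (sem B).2, rapp P R ∈ (sem A).1) },
       { P | ∃ P₁ P₂, FailEq P (tensor P₁ P₂) ∧ P₁ ∈ (sem A).2 ∧ P₂ ∈ (sem B).2 })
  | .wth A B =>
      ({ P | ∃ Q R, FailEq P (pairProc Q R) ∧ Q ∈ (sem A).1 ∧ R ∈ (sem B).1 },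
       { P | (∃ Q, FailEq P (.pre αBar Q) ∧ Q ∈ (sem A).2) ∨
             (∃ R, FailEq P (.pre βBar R) ∧ R ∈ (sem B).2) })
  | .oplus A B =>
      ({ P | (∃ Q, FailEq P (.pre αBar Q) ∧ Q ∈ (sem A).1) ∨
             (∃ R, FailEq P (.pre βBar R) ∧ R ∈ (sem B).1) },
       { P | ∃ Q R, FailEq P (pairProc Q R) ∧ Q ∈ (sem A).2 ∧ R ∈ (sem B).2 })
  | .bang A =>
      ({ P | ∃ Q, FailEq P (bangProc Q) ∧ Q ∈ (sem A).1 },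
       { P | BangNeg (sem A).1 (sem A).2 P })
  | .quest A =>
      ({ P | BangNeg (sem A).2 (sem A).1 P },
       { P | ∃ Q, FailEq P (bangProc Q) ∧ Q ∈ (sem A).2 })

/-- `P ⊩₊ A`: `P` positively realizes `A`. -/
def PosReal (P : Proc) (A : Formula) : Prop := P ∈ (sem A).1

/-- `P ⊩₋ A`: `P` is a counter-realizer of `A`. -/
def NegReal (P : Proc) (A : Formula) : Prop := P ∈ (sem A).2

/-- The interpretation `⅋Γ` of a sequent `Γ = A₁, …, A_k` as a single formula
(associated to the left, so that the last formula occupies the right half of the name space).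
The empty sequent is given the trivial interpretation. -/
def seqPar : List Formula → Formula
  | [] => .atom Set.univ Set.univ (fun _ _ _ h => h) (fun _ _ _ h => h)
  | A :: Γ => Γ.foldl .parr A

/-- `P ⊩₊ Γ` for a sequent `Γ`, treating `Γ` as `⅋Γ`. -/
def SeqReal (P : Proc) (Γ : List Formula) : Prop := PosReal P (seqPar Γ)


/-!
Under either application the wire only relays actions of its partner across the two halves of the
name space: hiding the partner's half forces each visible move to be a synchronisation with `I` on
exactly that action. Hence `⟨Q | I⟩` is strongly bisimilar to `Q` and `(I | R⟩` to `R`. Strong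
bisimilarity implies failures equivalence and is a congruence for application, so by induction on
`A` both realizer sets of every formula are closed under it. The claim for `A^⊥ ⅋ A` follows since
the realizers of `A^⊥` are the counter-realizers of `A` and vice versa.
-/

theorem Label.bar_bar (x : Label) : x.bar.bar = x := by cases x <;> rfl

theorem Label.bar_injective : Function.Injective Label.bar :=
  Function.LeftInverse.injective Label.bar_bar

theorem Label.image_bar_image_bar (a : Act) : (a.image Label.bar).image Label.bar = a := by
  simp [Finset.image_image, Function.comp_def, Label.bar_bar]

namespace Renaming

variable (f : Renaming)

theorem mem_onAction {a : Act} {z : Label} : z ∈ f.onAction a ↔ ∃ x ∈ a, f.toFun x = some z := by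
  simp [onAction]

theorem mem_of_mem_onAction {S : Set Label} (hS : ∀ x, ∃ y, f.toFun x = some y ∧ y ∈ S)
    {a : Act} {l : Label} (hl : l ∈ f.onAction a) : l ∈ S := by
  obtain ⟨x, -, hx⟩ := f.mem_onAction.mp hl
  obtain ⟨y, hy, hyS⟩ := hS x
  exact Option.some.inj (hx.symm.trans hy) ▸ hyS

@[simp]
theorem onAction_empty : f.onAction ∅ = ∅ := by
  ext z; simp [mem_onAction]

theorem onAction_image_bar (a : Act) :
    f.onAction (a.image Label.bar) = (f.onAction a).image Label.bar := by
  ext z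
  simp only [mem_onAction, Finset.mem_image, exists_exists_and_eq_and, f.bar]
  constructor
  · rintro ⟨x, hx, hz⟩
    obtain ⟨y, hy, rfl⟩ := Option.map_eq_some_iff.mp hz
    exact ⟨y, ⟨x, hx, hy⟩, rfl⟩
  · rintro ⟨y, ⟨x, hx, hy⟩, rfl⟩
    exact ⟨x, hx, by rw [hy]; rfl⟩

theorem onAction_injective (hf : ∀ x, ∃ y, f.toFun x = some y) :
    Function.Injective f.onAction := by
  suffices ∀ a b, f.onAction a ⊆ f.onAction b → a ⊆ b from
    fun a b h => (this a b h.le).antisymm (this b a h.ge)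
  intro a b h x hx
  obtain ⟨z, hz⟩ := hf x
  obtain ⟨y, hy, hyz⟩ := (f.mem_onAction).mp (h ((f.mem_onAction).mpr ⟨x, hx, hz⟩))
  exact f.inj hz hyz ▸ hy

theorem onAction_onAction_of_inverse {g : Renaming}
    (hg : ∀ x, ∃ y, f.toFun x = some y ∧ g.toFun y = some x) (a : Act) :
    g.onAction (f.onAction a) = a := by
  ext z
  simp only [mem_onAction]
  constructor
  · rintro ⟨y, ⟨x, hx, hxy⟩, hyz⟩
    obtain ⟨y', hy', hgy'⟩ := hg x
    rw [hxy, Option.some.injEq] at hy'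
    rw [hy', hgy', Option.some.injEq] at hyz
    exact hyz ▸ hx
  · intro hz
    obtain ⟨y, hy, hgy⟩ := hg z
    exact ⟨y, ⟨z, hz, hy⟩, hgy⟩

end Renaming

def IsStrongSim (R : Proc → Proc → Prop) : Prop :=
  ∀ ⦃P Q⦄, R P Q → ∀ a P', Step P a P' → ∃ Q', Step Q a Q' ∧ R P' Q'

def StrongBisim (P Q : Proc) : Prop :=
  ∃ R, IsStrongSim R ∧ IsStrongSim (flip R) ∧ R P Q

namespace StrongBisim

variable {P Q X : Proc}

theorem of_symmetric {R : Proc → Proc → Prop} (hsymm : ∀ P Q, R P Q → R Q P)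
    (hsim : IsStrongSim R) (h : R P Q) : StrongBisim P Q := by
  refine ⟨R, hsim, fun P Q hPQ a P' hs => ?_, h⟩
  obtain ⟨Q', hs', hQ'⟩ := hsim (hsymm _ _ hPQ) a P' hs
  exact ⟨Q', hs', hsymm _ _ hQ'⟩

theorem symm (h : StrongBisim P Q) : StrongBisim Q P :=
  let ⟨R, h₁, h₂, hPQ⟩ := h
  ⟨flip R, h₂, h₁, hPQ⟩

theorem isStrongSim : IsStrongSim StrongBisim := by
  rintro P Q ⟨R, h₁, h₂, hPQ⟩ a P' hs
  obtain ⟨Q', hs', hR⟩ := h₁ hPQ a P' hs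
  exact ⟨Q', hs', R, h₁, h₂, hR⟩

theorem step (h : StrongBisim P Q) {a : Act} {P' : Proc} (hs : Step P a P') :
    ∃ Q', Step Q a Q' ∧ StrongBisim P' Q' :=
  isStrongSim h a P' hs

theorem refl (P : Proc) : StrongBisim P P :=
  of_symmetric (R := Eq) (fun _ _ => Eq.symm) (by rintro P _ rfl a P' hs; exact ⟨P', hs, rfl⟩) rfl

theorem trans (h₁ : StrongBisim P X) (h₂ : StrongBisim X Q) : StrongBisim P Q := by
  refine of_symmetric (R := fun P Q => ∃ X, StrongBisim P X ∧ StrongBisim X Q)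
    (fun _ _ ⟨X, h₁, h₂⟩ => ⟨X, h₂.symm, h₁.symm⟩) ?_ ⟨X, h₁, h₂⟩
  rintro P Q ⟨X, h₁, h₂⟩ a P' hs
  obtain ⟨X', hsX, h₁'⟩ := h₁.step hs
  obtain ⟨Q', hsQ, h₂'⟩ := h₂.step hsX
  exact ⟨Q', hsQ, X', h₁', h₂'⟩

theorem par_congr {P' Q' : Proc} (hP : StrongBisim P P') (hQ : StrongBisim Q Q') :
    StrongBisim (.par P Q) (.par P' Q') := by
  refine of_symmetric (R := fun u v => ∃ P P' Q Q', StrongBisim P P' ∧ StrongBisim Q Q' ∧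
      u = .par P Q ∧ v = .par P' Q')
    (fun _ _ ⟨P, P', Q, Q', hP, hQ, hu, hv⟩ => ⟨P', P, Q', Q, hP.symm, hQ.symm, hv, hu⟩)
    ?_ ⟨P, P', Q, Q', hP, hQ, rfl, rfl⟩
  rintro _ _ ⟨P, P', Q, Q', hP, hQ, rfl, rfl⟩ a S hs
  cases hs with
  | parL hs =>
    obtain ⟨P₁, hs', hP₁⟩ := hP.step hs
    exact ⟨_, .parL hs', _, _, _, _, hP₁, hQ, rfl, rfl⟩
  | parR hs =>
    obtain ⟨Q₁, hs', hQ₁⟩ := hQ.step hs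
    exact ⟨_, .parR hs', _, _, _, _, hP, hQ₁, rfl, rfl⟩
  | sync hsP hsQ hab hbc hac =>
    obtain ⟨P₁, hsP', hP₁⟩ := hP.step hsP
    obtain ⟨Q₁, hsQ', hQ₁⟩ := hQ.step hsQ
    exact ⟨_, .sync hsP' hsQ' hab hbc hac, _, _, _, _, hP₁, hQ₁, rfl, rfl⟩

theorem restrict_congr (L : Set Label) (h : StrongBisim P Q) :
    StrongBisim (.restrict P L) (.restrict Q L) := by
  refine of_symmetric
    (R := fun u v => ∃ P Q, StrongBisim P Q ∧ u = .restrict P L ∧ v = .restrict Q L)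
    (fun _ _ ⟨P, Q, h, hu, hv⟩ => ⟨Q, P, h.symm, hv, hu⟩) ?_ ⟨P, Q, h, rfl, rfl⟩
  rintro _ _ ⟨P, Q, h, rfl, rfl⟩ a S hs
  cases hs with
  | restrict hs hL =>
    obtain ⟨Q', hs', h'⟩ := h.step hs
    exact ⟨_, .restrict hs' hL, _, _, h', rfl, rfl⟩

theorem rename_congr (f : Renaming) (h : StrongBisim P Q) :
    StrongBisim (.rename P f) (.rename Q f) := by
  refine of_symmetric
    (R := fun u v => ∃ P Q, StrongBisim P Q ∧ u = .rename P f ∧ v = .rename Q f)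
    (fun _ _ ⟨P, Q, h, hu, hv⟩ => ⟨Q, P, h.symm, hv, hu⟩) ?_ ⟨P, Q, h, rfl, rfl⟩
  rintro _ _ ⟨P, Q, h, rfl, rfl⟩ a S hs
  cases hs with
  | rename hs hf =>
    obtain ⟨Q', hs', h'⟩ := h.step hs
    exact ⟨_, .rename hs' hf, _, _, h', rfl, rfl⟩

theorem par_comm (P Q : Proc) : StrongBisim (.par P Q) (.par Q P) := by
  refine of_symmetric (R := fun u v => ∃ P Q, u = .par P Q ∧ v = .par Q P)
    (fun _ _ ⟨P, Q, hu, hv⟩ => ⟨Q, P, hv, hu⟩) ?_ ⟨P, Q, rfl, rfl⟩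
  rintro _ _ ⟨P, Q, rfl, rfl⟩ a S hs
  cases hs with
  | parL hs => exact ⟨_, .parR hs, _, _, rfl, rfl⟩
  | parR hs => exact ⟨_, .parL hs, _, _, rfl, rfl⟩
  | @sync _ _ _ _ a b c hsP hsQ hab hbc hac =>
    refine ⟨_, ?_, _, _, rfl, rfl⟩
    rw [Finset.union_comm a c]
    refine .sync (a := c) (b := b.image Label.bar) (c := a) ?_ ?_ hbc.symm ?_ hac.symm
    · rwa [Finset.union_comm]
    · rwa [Label.image_bar_image_bar, Finset.union_comm]
    · rwa [Label.image_bar_image_bar, disjoint_comm]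

theorem tauStar {P P' : Proc} (hP : TauStar P P') (h : StrongBisim P Q) :
    ∃ Q', TauStar Q Q' ∧ StrongBisim P' Q' := by
  induction hP with
  | refl => exact ⟨Q, .refl, h⟩
  | tail _ hs ih =>
    obtain ⟨Q₁, hQ₁, h₁⟩ := ih
    obtain ⟨Q', hs', h'⟩ := h₁.step hs
    exact ⟨Q', hQ₁.tail hs', h'⟩

theorem obs {P' : Proc} {a : Act} (h : StrongBisim P Q) (hP : Obs P a P') :
    ∃ Q', Obs Q a Q' ∧ StrongBisim P' Q' := by
  obtain ⟨P₁, P₂, hP₁, hs, hP₂⟩ := hP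
  obtain ⟨Q₁, hQ₁, h₁⟩ := tauStar hP₁ h
  obtain ⟨Q₂, hs', h₂⟩ := h₁.step hs
  obtain ⟨Q', hQ', h'⟩ := tauStar hP₂ h₂
  exact ⟨Q', ⟨Q₁, Q₂, hQ₁, hs', hQ'⟩, h'⟩

theorem obsSeq {P' : Proc} {s : List Act} (hP : ObsSeq P s P') (h : StrongBisim P Q) :
    ∃ Q', ObsSeq Q s Q' ∧ StrongBisim P' Q' := by
  induction hP generalizing Q with
  | nil hτ =>
    obtain ⟨Q', hQ', h'⟩ := tauStar hτ h
    exact ⟨Q', .nil hQ', h'⟩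
  | cons ho _ ih =>
    obtain ⟨Q₁, hQ₁, h₁⟩ := h.obs ho
    obtain ⟨Q', hQ', h'⟩ := ih h₁
    exact ⟨Q', .cons hQ₁ hQ', h'⟩

theorem failures_subset (h : StrongBisim P Q) : failures P ⊆ failures Q := by
  rintro ⟨s, X⟩ ⟨hs, hX, P', hP', hrefuse⟩
  obtain ⟨Q', hQ', h'⟩ := obsSeq hP' h
  refine ⟨hs, hX, Q', hQ', fun a ha ⟨R, hR⟩ => ?_⟩
  obtain ⟨R', hR', -⟩ := h'.symm.obs hR
  exact hrefuse a ha ⟨R', hR'⟩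

theorem failEq (h : StrongBisim P Q) : FailEq P Q :=
  h.failures_subset.antisymm h.symm.failures_subset

end StrongBisim

theorem Finset.eq_and_eq_of_union_eq_union {α : Type*} [DecidableEq α] {s t u v : Finset α}
    {M : Set α} (hs : ∀ x ∈ s, x ∈ M) (ht : ∀ x ∈ t, x ∉ M) (hu : ∀ x ∈ u, x ∈ M)
    (hv : ∀ x ∈ v, x ∉ M) (h : s ∪ t = u ∪ v) : s = u ∧ t = v := by
  classical
  have hM : (s ∪ t).filter (· ∈ M) = s := by
    rw [Finset.filter_union, Finset.filter_true_of_mem hs, Finset.filter_false_of_mem ht,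
      Finset.union_empty]
  have hMc : (s ∪ t).filter (· ∉ M) = t := by
    rw [Finset.filter_union, Finset.filter_false_of_mem (by simpa using hs),
      Finset.filter_true_of_mem ht, Finset.empty_union]
  rw [h, Finset.filter_union, Finset.filter_true_of_mem hu, Finset.filter_false_of_mem hv,
    Finset.union_empty] at hM
  rw [h, Finset.filter_union, Finset.filter_false_of_mem (by simpa using hu),
    Finset.filter_true_of_mem hv, Finset.empty_union] at hMc
  exact ⟨hM.symm, hMc.symm⟩

def IsWire (W : Proc) (f h : Renaming) : Prop :=
  ∀ x W', Step W x W' ↔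
    ∃ a : Act, a.Nonempty ∧ x = (f.onAction a).image Label.bar ∪ h.onAction a ∧ W' = W

/-- `lapp X W = W.plug lRen LabL rInv X`. -/
def Proc.plug (W : Proc) (f : Renaming) (L : Set Label) (g : Renaming) (X : Proc) : Proc :=
  (((X.rename f).par W).restrict L).rename g

section Wire

variable {W : Proc} {f h g : Renaming} {L : Set Label}
  (hW : IsWire W f h) (hf : ∀ x, ∃ y, f.toFun x = some y ∧ y ∈ L)
  (hh : ∀ x, ∃ y, h.toFun x = some y ∧ y ∉ L ∧ y.bar ∉ L ∧ g.toFun y = some x)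
include hW hf hh

theorem step_of_step_plug {X S : Proc} {y : Act} (hs : Step (W.plug f L g X) y S) :
    ∃ X', Step X y X' ∧ S = W.plug f L g X' := by
  have hfL : ∀ {a l}, l ∈ f.onAction a → l ∈ L := f.mem_of_mem_onAction hf
  have hhL : ∀ {a l}, l ∈ h.onAction a → l.bar ∉ L :=
    h.mem_of_mem_onAction (S := {y | y.bar ∉ L})
      fun x => (hh x).imp fun _ hy => ⟨hy.1, hy.2.2.1⟩
  have hfinj := f.onAction_injective fun x => (hf x).imp fun _ hy => hy.1
  have hgh := h.onAction_onAction_of_inverse fun x => (hh x).imp fun _ hy => ⟨hy.1, hy.2.2.2⟩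
  cases hs with | @rename _ m _ _ hs _ => ?_
  cases hs with | restrict hs hres => ?_
  have hempty : ∀ {a : Act}, (∀ l ∈ a, l ∈ L) → a ⊆ m → a = ∅ := fun haL ham =>
    Finset.eq_empty_of_forall_notMem fun l hl => (hres l (ham hl)).1 (haL l hl)
  cases hs with
  | parL hs =>
    cases hs with | @rename _ aX _ _ hs _ => ?_
    have hm : f.onAction aX = ∅ := hempty (fun _ => hfL) subset_rfl
    obtain rfl : aX = ∅ := hfinj (hm.trans f.onAction_empty.symm)
    exact ⟨_, by simpa [hm] using hs, rfl⟩
  | parR hs =>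
    obtain ⟨a, ⟨x, hx⟩, rfl, -⟩ := (hW _ _).mp hs
    obtain ⟨y, hy, hyL⟩ := hf x
    have hyf : y ∈ f.onAction a := f.mem_onAction.mpr ⟨x, hx, hy⟩
    exact ((hres _ (Finset.mem_union_left _ (Finset.mem_image_of_mem _ hyf))).2
      (by rwa [Label.bar_bar])).elim
  | @sync _ _ _ _ a b c hsX hsW _ _ _ =>
    -- `X` cannot keep a visible part of its action, so all of it meets `W`, and `W`'s action
    -- splits along `{l | l̄ ∈ L}` into the part matched by `X` and the part it exposes.
    generalize hab : a ∪ b = ab at hsX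
    cases hsX with | @rename _ aX X' _ hsX _ => ?_
    obtain ⟨a', -, hW', rfl⟩ := (hW _ _).mp hsW
    obtain rfl : a = ∅ := hempty (fun l hl => hfL (hab ▸ Finset.mem_union_left _ hl))
      Finset.subset_union_left
    rw [Finset.empty_union] at hab hres ⊢
    subst hab
    have hbarL : ∀ a, ∀ l ∈ (f.onAction a).image Label.bar, l.bar ∈ L := by
      simp only [Finset.mem_image]
      rintro a _ ⟨l, hl, rfl⟩
      simpa [Label.bar_bar] using hfL hl
    obtain ⟨hb, rfl⟩ := Finset.eq_and_eq_of_union_eq_union (M := {l : Label | l.bar ∈ L})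
      (hbarL aX) (fun l hl => (hres l hl).2) (hbarL a') (fun l hl => hhL hl) hW'
    obtain rfl : aX = a' := hfinj (Finset.image_injective Label.bar_injective hb)
    exact ⟨X', by rwa [hgh], rfl⟩

theorem step_plug_of_step {X X' : Proc} {y : Act} (hs : Step X y X') :
    Step (W.plug f L g X) y (W.plug f L g X') := by
  rcases y.eq_empty_or_nonempty with rfl | hne
  · simpa [Proc.plug] using (Step.parL (Q := W) (Step.rename (f := f) hs (by simp))).restrict
      (L := L) (by simp) |>.rename (f := g) (by simp)
  have hfX : Step (X.rename f) (∅ ∪ f.onAction y) (X'.rename f) := by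
    rw [Finset.empty_union]
    exact .rename hs fun l _ => by obtain ⟨_, hl, -⟩ := hf l; simp [hl]
  have hhL : ∀ l ∈ h.onAction y, l ∉ L ∧ l.bar ∉ L ∧ (g.toFun l).isSome := fun l hl => by
    obtain ⟨x, -, hx⟩ := h.mem_onAction.mp hl
    obtain ⟨_, hx', hL, hbL, hg⟩ := hh x
    cases hx.symm.trans hx'
    exact ⟨hL, hbL, by simp [hg]⟩
  have hdisj : Disjoint ((f.onAction y).image Label.bar) (h.onAction y) := by
    refine Finset.disjoint_left.mpr fun l hl hlh => (hhL l hlh).2.1 ?_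
    obtain ⟨k, hk, rfl⟩ := Finset.mem_image.mp hl
    simpa [Label.bar_bar] using f.mem_of_mem_onAction hf hk
  have hsync := Step.sync hfX ((hW _ _).mpr ⟨y, hne, rfl, rfl⟩) (Finset.disjoint_empty_left _)
    hdisj (Finset.disjoint_empty_left _)
  rw [Finset.empty_union] at hsync
  have hplug := (hsync.restrict (L := L) fun l hl => ⟨(hhL l hl).1, (hhL l hl).2.1⟩).rename
    (f := g) fun l hl => (hhL l hl).2.2
  rwa [h.onAction_onAction_of_inverse fun x => (hh x).imp fun _ hy => ⟨hy.1, hy.2.2.2⟩]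
    at hplug

theorem Proc.plug_bisim (X : Proc) : StrongBisim (W.plug f L g X) X := by
  refine ⟨fun u v => u = W.plug f L g v, ?_, ?_, rfl⟩
  · rintro _ X rfl a S hs
    exact step_of_step_plug hW hf hh hs
  · rintro X _ rfl a X' hs
    exact ⟨_, step_plug_of_step hW hf hh hs, rfl⟩

end Wire

theorem step_Iproc_iff {x : Act} {P' : Proc} :
    Step Iproc x P' ↔
      ∃ a : Act, a.Nonempty ∧ x = lRen.onAction a ∪ (rRen.onAction a).image Label.bar ∧
        P' = Iproc := by
  constructor
  · intro hs
    cases hs with | fix hs => ?_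
    cases hs with | sum j hj => ?_
    obtain ⟨a, ha, hne⟩ := hj
    exact ⟨a, hne, by simp [ha], rfl⟩
  · rintro ⟨a, hne, rfl, rfl⟩
    refine .fix ?_
    have hj : Encodable.encode a ∈ {n | ∃ b : Act, Encodable.decode n = some b ∧ b.Nonempty} :=
      ⟨a, Encodable.encodek a, hne⟩
    show Step (.sum _ _ (fun _ => Iproc) _) _ _
    convert Step.sum _ hj using 1
    simp [Encodable.encodek]

theorem isWire_Iproc_lRen_rRen : IsWire Iproc lRen rRen := by
  have key : ∀ a : Act, (lRen.onAction (a.image Label.bar)).image Label.bar ∪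
      rRen.onAction (a.image Label.bar) = lRen.onAction a ∪ (rRen.onAction a).image Label.bar := by
    intro a
    rw [Renaming.onAction_image_bar, Renaming.onAction_image_bar, Label.image_bar_image_bar]
  intro x W'
  rw [step_Iproc_iff]
  constructor
  · rintro ⟨a, hne, rfl, rfl⟩
    exact ⟨a.image Label.bar, hne.image _, (key a).symm, rfl⟩
  · rintro ⟨a, hne, rfl, rfl⟩
    refine ⟨a.image Label.bar, hne.image _, ?_, rfl⟩
    simpa only [Label.image_bar_image_bar] using key (a.image Label.bar)

theorem isWire_Iproc_rRen_lRen : IsWire Iproc rRen lRen := by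
  intro x W'
  simp only [step_Iproc_iff, Finset.union_comm]

theorem lapp_Iproc_bisim (X : Proc) : StrongBisim (lapp X Iproc) X :=
  Iproc.plug_bisim isWire_Iproc_lRen_rRen
    (by rintro (n | n) <;> exact ⟨_, rfl, by simp [LabL, Label.name]⟩)
    (by rintro (n | n) <;> refine ⟨_, rfl, ?_⟩ <;>
      simp [LabL, Label.name, Label.bar, rInv, Renaming.ofNameFun] <;> omega) X

theorem rapp_Iproc_bisim (R : Proc) : StrongBisim (rapp Iproc R) R :=
  (((StrongBisim.par_comm _ _).restrict_congr LabR).rename_congr lInv).trans <|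
    Iproc.plug_bisim isWire_Iproc_rRen_lRen
      (by rintro (n | n) <;> exact ⟨_, rfl, by simp [LabR, Label.name]⟩)
      (by rintro (n | n) <;> refine ⟨_, rfl, ?_⟩ <;>
        simp [LabR, Label.name, Label.bar, lInv, Renaming.ofNameFun]) R

theorem StrongBisim.lapp_congr (Q : Proc) {P P' : Proc} (h : StrongBisim P P') :
    StrongBisim (lapp Q P) (lapp Q P') :=
  ((StrongBisim.refl _).par_congr h |>.restrict_congr _).rename_congr _

theorem StrongBisim.rapp_congr (R : Proc) {P P' : Proc} (h : StrongBisim P P') :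
    StrongBisim (rapp P R) (rapp P' R) :=
  (h.par_congr (StrongBisim.refl _) |>.restrict_congr _).rename_congr _

theorem StrongBisim.failEq_of_failEq {P Q X : Proc} (h : StrongBisim P Q) (hP : FailEq P X) :
    FailEq Q X :=
  h.symm.failEq.trans hP

theorem BangNeg.of_bisim {pos neg : Set Proc} {P Q : Proc} (h : StrongBisim P Q)
    (hP : BangNeg pos neg P) : BangNeg pos neg Q := by
  cases hP with
  | weak hf => exact .weak (h.failEq_of_failEq hf)
  | der hf hm => exact .der (h.failEq_of_failEq hf) hm
  | contr hf hl hr => exact .contr (h.failEq_of_failEq hf) hl hr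

theorem sem_bisim_closed (A : Formula) :
    (∀ ⦃P Q⦄, StrongBisim P Q → P ∈ (sem A).1 → Q ∈ (sem A).1) ∧
    (∀ ⦃P Q⦄, StrongBisim P Q → P ∈ (sem A).2 → Q ∈ (sem A).2) := by
  induction A with
  | atom pos neg hpos hneg => exact ⟨fun _ _ h => hpos h.failEq, fun _ _ h => hneg h.failEq⟩
  | tensor A B ihA ihB =>
    refine ⟨?_, ?_⟩
    · rintro P Q h ⟨P₁, P₂, hf, h₁, h₂⟩
      exact ⟨P₁, P₂, h.failEq_of_failEq hf, h₁, h₂⟩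
    · rintro P Q h ⟨h₁, h₂⟩
      exact ⟨fun X hX => ihB.2 (h.lapp_congr X) (h₁ X hX),
        fun X hX => ihA.2 (h.rapp_congr X) (h₂ X hX)⟩
  | parr A B ihA ihB =>
    refine ⟨?_, ?_⟩
    · rintro P Q h ⟨h₁, h₂⟩
      exact ⟨fun X hX => ihB.1 (h.lapp_congr X) (h₁ X hX),
        fun X hX => ihA.1 (h.rapp_congr X) (h₂ X hX)⟩
    · rintro P Q h ⟨P₁, P₂, hf, h₁, h₂⟩
      exact ⟨P₁, P₂, h.failEq_of_failEq hf, h₁, h₂⟩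
  | wth A B =>
    refine ⟨?_, ?_⟩
    · rintro P Q h ⟨X, Y, hf, h₁, h₂⟩
      exact ⟨X, Y, h.failEq_of_failEq hf, h₁, h₂⟩
    · rintro P Q h (⟨X, hf, hX⟩ | ⟨X, hf, hX⟩)
      exacts [.inl ⟨X, h.failEq_of_failEq hf, hX⟩, .inr ⟨X, h.failEq_of_failEq hf, hX⟩]
  | oplus A B =>
    refine ⟨?_, ?_⟩
    · rintro P Q h (⟨X, hf, hX⟩ | ⟨X, hf, hX⟩)
      exacts [.inl ⟨X, h.failEq_of_failEq hf, hX⟩, .inr ⟨X, h.failEq_of_failEq hf, hX⟩]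
    · rintro P Q h ⟨X, Y, hf, h₁, h₂⟩
      exact ⟨X, Y, h.failEq_of_failEq hf, h₁, h₂⟩
  | bang A =>
    refine ⟨?_, fun _ _ h => BangNeg.of_bisim h⟩
    rintro P Q h ⟨X, hf, hX⟩
    exact ⟨X, h.failEq_of_failEq hf, hX⟩
  | quest A =>
    refine ⟨fun _ _ h => BangNeg.of_bisim h, ?_⟩
    rintro P Q h ⟨X, hf, hX⟩
    exact ⟨X, h.failEq_of_failEq hf, hX⟩

theorem sem_neg (A : Formula) : sem A.neg = ((sem A).2, (sem A).1) := by
  induction A <;> simp_all [Formula.neg, sem]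

/-- **Soundness of the Identity axiom**: for every formula `A`, the wire process
`I = rec X. Σ_{a ∈ Act₊} (l(a) ∪ r(a)‾).X` satisfies `I ⊩₊ A^⊥ ⅋ A`, i.e. `I` realizes
`A ⊸ A`: it carries realizers of `A` to realizers of `A` under left application, and
counter-realizers of `A` to counter-realizers of `A` under right application. -/
theorem identity_axiom_sound (A : Formula) :
    PosReal Iproc (Formula.parr A.neg A) ∧
    (∀ Q : Proc, PosReal Q A → PosReal (lapp Q Iproc) A) ∧
    (∀ R : Proc, NegReal R A → NegReal (rapp Iproc R) A) := by
  have hpos : ∀ Q ∈ (sem A).1, lapp Q Iproc ∈ (sem A).1 := fun Q hQ =>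
    (sem_bisim_closed A).1 (lapp_Iproc_bisim Q).symm hQ
  have hneg : ∀ R ∈ (sem A).2, rapp Iproc R ∈ (sem A).2 := fun R hR =>
    (sem_bisim_closed A).2 (rapp_Iproc_bisim R).symm hR
  refine ⟨?_, hpos, hneg⟩
  simpa only [PosReal, sem, sem_neg] using ⟨hpos, hneg⟩
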